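/- Let G be a finite additive abelian group with invariant factor decomposition G ≃ ⊕_{i ∈ Fin d} ℤ/(n i)ℤ, where each n i > 1 and n i divides n j whenever i ≤ j. Let H be a subgroup of G with invariant factor decomposition H ≃ ⊕_{i ∈ Fin r} ℤ/(n' i)ℤ, where each n' i > 1 and n' i divides n' j whenever i ≤ j. Then r ≤ d, and for every i ∈ Fin r, n' i divides n (d − r + i) (i.e., the invariant factors of H, aligned at the tail, divide those of G). -/

import Mathlib

/-!
For a prime `p` and `k : ℕ`, the group `(p ^ k • A)[p]` has order
`p ^ #{i | p ^ (k + 1) ∣ n i}` when `A ≃+ ∀ i, ZMod (n i)`, and it can only grow when `A` is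
enlarged. Hence for every prime power `q ≠ 1`, at most as many invariant factors of `H` as of `G`
are divisible by `q`. Because invariant factors form a divisibility chain, those divisible by `q`
form a final segment, and comparing these final segments prime power by prime power gives
`n' i ∣ n (d - r + i)`.
-/

open Finset

def torsionInMultiples (A : Type*) [AddCommGroup A] (p k : ℕ) : AddSubgroup A :=
  (nsmulAddMonoidHom (p ^ k)).range ⊓ AddSubgroup.torsionBy A p

section

variable {A B : Type*} [AddCommGroup A] [AddCommGroup B] {p k : ℕ}

theorem mem_torsionInMultiples {x : A} :
    x ∈ torsionInMultiples A p k ↔ (∃ y : A, p ^ k • y = x) ∧ p • x = 0 := by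
  simp [torsionInMultiples]

theorem card_torsionInMultiples_congr (e : A ≃+ B) :
    Nat.card (torsionInMultiples A p k) = Nat.card (torsionInMultiples B p k) :=
  Nat.card_congr <| e.toEquiv.subtypeEquiv fun x => by
    simp only [mem_torsionInMultiples, AddEquiv.toEquiv_eq_coe, EquivLike.coe_coe,
      e.surjective.exists, ← map_nsmul, e.injective.eq_iff, map_eq_zero_iff e e.injective]

theorem card_torsionInMultiples_addSubgroup_le [Finite A] (H : AddSubgroup A) :
    Nat.card (torsionInMultiples H p k) ≤ Nat.card (torsionInMultiples A p k) := by
  refine Nat.card_le_card_of_injective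
    (fun x => ⟨x.1, mem_torsionInMultiples.2 ?_⟩) fun x y hxy => ?_
  · obtain ⟨⟨y, hy⟩, hx⟩ := mem_torsionInMultiples.1 x.2
    exact ⟨⟨y, congrArg Subtype.val hy⟩, congrArg Subtype.val hx⟩
  · ext
    simpa using congrArg Subtype.val hxy

theorem card_torsionInMultiples_pi {ι : Type*} [Fintype ι] (A : ι → Type*)
    [∀ i, AddCommGroup (A i)] :
    Nat.card (torsionInMultiples (∀ i, A i) p k) =
      ∏ i, Nat.card (torsionInMultiples (A i) p k) := by
  rw [← Nat.card_pi]
  refine Nat.card_congr <| (Equiv.subtypeEquivRight fun x => ?_).trans Equiv.subtypePiEquivPi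
  simp only [mem_torsionInMultiples, funext_iff, Pi.smul_apply, Pi.zero_apply,
    Classical.skolem, forall_and]

theorem torsionInMultiples_eq_bot_of_not_dvd_card [Finite A] (hp : p.Prime)
    (h : ¬ p ^ (k + 1) ∣ Nat.card A) : torsionInMultiples A p k = ⊥ := by
  refine (AddSubgroup.eq_bot_iff_forall _).2 fun x hx => ?_
  obtain ⟨⟨y, rfl⟩, hy⟩ := mem_torsionInMultiples.1 hx
  have hgcd : Nat.gcd (p ^ (k + 1)) (Nat.card A) ∣ p ^ k := by
    obtain ⟨j, hj, hgcd⟩ := (Nat.dvd_prime_pow hp).1 (Nat.gcd_dvd_left _ _)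
    have hjk : j ≠ k + 1 := by
      rintro rfl
      exact h (hgcd ▸ Nat.gcd_dvd_right _ _)
    exact hgcd ▸ pow_dvd_pow p (by omega)
  rw [← addOrderOf_dvd_iff_nsmul_eq_zero]
  refine dvd_trans (Nat.dvd_gcd ?_ (addOrderOf_dvd_natCard y)) hgcd
  rwa [addOrderOf_dvd_iff_nsmul_eq_zero, pow_succ', mul_smul]

theorem card_torsionInMultiples_zmod_of_dvd {m : ℕ} [NeZero m] (hp : p.Prime)
    (h : p ^ (k + 1) ∣ m) : Nat.card (torsionInMultiples (ZMod m) p k) = p := by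
  obtain ⟨q, rfl⟩ := h
  have hq : q ≠ 0 := by rintro rfl; exact NeZero.ne (p ^ (k + 1) * 0) rfl
  set g : ZMod (p ^ (k + 1) * q) := ((p ^ k * q : ℕ) : ZMod (p ^ (k + 1) * q))
  have hg : addOrderOf g = p := by
    have hpk : p ^ (k + 1) * q = p * (p ^ k * q) := by ring
    have hpos : 0 < p ^ k * q := Nat.pos_of_ne_zero (mul_ne_zero (pow_ne_zero k hp.ne_zero) hq)
    rw [ZMod.addOrderOf_coe' _ hpos.ne', hpk, Nat.gcd_eq_right (dvd_mul_left _ _),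
      Nat.mul_div_cancel _ hpos]
  have hgmem : g ∈ torsionInMultiples (ZMod (p ^ (k + 1) * q)) p k :=
    mem_torsionInMultiples.2
      ⟨⟨q, by simp [g]⟩, by simpa [hg] using addOrderOf_nsmul_eq_zero g⟩
  refine le_antisymm ?_ ?_
  · classical
    calc Nat.card (torsionInMultiples (ZMod (p ^ (k + 1) * q)) p k)
        ≤ #{x : ZMod (p ^ (k + 1) * q) | p • x = 0} := by
          rw [← Nat.card_eq_finsetCard]
          exact Nat.card_mono (Set.toFinite _) fun x hx => by
            simpa using (mem_torsionInMultiples.1 hx).2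
      _ ≤ p := IsAddCyclic.card_nsmul_eq_zero_le hp.pos
  · calc p = Nat.card (AddSubgroup.zmultiples g) := by rw [Nat.card_zmultiples, hg]
      _ ≤ _ := AddSubgroup.card_le_of_le (AddSubgroup.zmultiples_le.2 hgmem)

theorem card_torsionInMultiples_pi_zmod {ι : Type*} [Fintype ι] (n : ι → ℕ)
    [∀ i, NeZero (n i)] (hp : p.Prime) :
    Nat.card (torsionInMultiples (∀ i, ZMod (n i)) p k) = p ^ #{i | p ^ (k + 1) ∣ n i} := by
  rw [card_torsionInMultiples_pi, ← prod_const, prod_filter]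
  refine prod_congr rfl fun i _ => ?_
  split_ifs with h
  · exact card_torsionInMultiples_zmod_of_dvd hp h
  · rw [torsionInMultiples_eq_bot_of_not_dvd_card hp (by rwa [Nat.card_zmod]),
      AddSubgroup.card_bot]

end

theorem card_filter_prime_pow_dvd_le {G : Type*} [AddCommGroup G] [Finite G] (H : AddSubgroup G)
    {d r : ℕ} (n : Fin d → ℕ) (n' : Fin r → ℕ) [∀ i, NeZero (n i)]
    [∀ i, NeZero (n' i)] (e : G ≃+ ∀ i, ZMod (n i)) (e' : H ≃+ ∀ i, ZMod (n' i))
    {p a : ℕ} (hp : p.Prime) (ha : a ≠ 0) :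
    #{i | p ^ a ∣ n' i} ≤ #{i | p ^ a ∣ n i} := by
  obtain ⟨k, rfl⟩ := Nat.exists_eq_add_one_of_ne_zero ha
  refine (Nat.pow_le_pow_iff_right hp.one_lt).1 ?_
  calc p ^ #{i | p ^ (k + 1) ∣ n' i}
      = Nat.card (torsionInMultiples H p k) := by
        rw [card_torsionInMultiples_congr e', card_torsionInMultiples_pi_zmod n' hp]
    _ ≤ Nat.card (torsionInMultiples G p k) := card_torsionInMultiples_addSubgroup_le H
    _ = p ^ #{i | p ^ (k + 1) ∣ n i} := by
        rw [card_torsionInMultiples_congr e, card_torsionInMultiples_pi_zmod n hp]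

namespace Fin

variable {d : ℕ} {P : Fin d → Prop} [DecidablePred P]

theorem sub_le_card_filter_of_monotone (hP : Monotone P) {i : Fin d} (hi : P i) :
    d - i ≤ #{j | P j} := by
  rw [← card_Ici]
  exact card_le_card fun j hj => mem_filter.2 ⟨mem_univ j, hP (mem_Ici.1 hj) hi⟩

theorem of_sub_le_card_filter_of_monotone (hP : Monotone P) {i : Fin d}
    (h : d - i ≤ #{j | P j}) : P i := by
  by_contra hi
  have hsub : ({j | P j} : Finset (Fin d)) ⊆ Ioi i := fun j hj =>
    mem_Ioi.2 <| lt_of_not_ge fun hji => hi (hP hji (by simpa using hj))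
  have := (card_le_card hsub).trans_eq (card_Ioi i)
  omega

end Fin

theorem stmt18 {G : Type*} [AddCommGroup G] [Finite G]
    (d : ℕ) (n : Fin d → ℕ) (hn1 : ∀ i, 1 < n i)
    (hndvd : ∀ i j : Fin d, i ≤ j → n i ∣ n j)
    (e : G ≃+ ∀ i : Fin d, ZMod (n i))
    (H : AddSubgroup G)
    (r : ℕ) (n' : Fin r → ℕ) (hn'1 : ∀ i, 1 < n' i)
    (hn'dvd : ∀ i j : Fin r, i ≤ j → n' i ∣ n' j)
    (e' : H ≃+ ∀ i : Fin r, ZMod (n' i)) :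
    ∃ h : r ≤ d, ∀ i : Fin r,
      n' i ∣ n ⟨d - r + i.val, by have := i.isLt; omega⟩ := by
  have : ∀ i, NeZero (n i) := fun i => ⟨by have := hn1 i; omega⟩
  have : ∀ i, NeZero (n' i) := fun i => ⟨by have := hn'1 i; omega⟩
  have hmono : ∀ q, Monotone fun i => q ∣ n i := fun q i j hij hi => hi.trans (hndvd i j hij)
  have hmono' : ∀ q, Monotone fun i => q ∣ n' i := fun q i j hij hi => hi.trans (hn'dvd i j hij)
  have hcount {p a : ℕ} (hp : p.Prime) (ha : a ≠ 0) :
      #{i | p ^ a ∣ n' i} ≤ #{i | p ^ a ∣ n i} :=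
    card_filter_prime_pow_dvd_le H n n' e e' hp ha
  have hrd : r ≤ d := by
    rcases Nat.eq_zero_or_pos r with hr | hr
    · omega
    obtain ⟨p, hp, hpn⟩ := Nat.exists_prime_and_dvd (hn'1 ⟨0, hr⟩).ne'
    calc r = r - (⟨0, hr⟩ : Fin r) := rfl
      _ ≤ #{i | p ^ 1 ∣ n' i} := Fin.sub_le_card_filter_of_monotone (hmono' _) (by simpa)
      _ ≤ #{i | p ^ 1 ∣ n i} := hcount hp one_ne_zero
      _ ≤ d := (card_filter_le _ _).trans_eq (card_fin d)
  refine ⟨hrd, fun i => (Nat.dvd_iff_prime_pow_dvd_dvd _ _).2 fun p a hp hpa => ?_⟩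
  rcases eq_or_ne a 0 with rfl | ha
  · simp
  refine Fin.of_sub_le_card_filter_of_monotone (hmono _) ?_
  calc d - (d - r + i.val) = r - i := by omega
    _ ≤ #{j | p ^ a ∣ n' j} := Fin.sub_le_card_filter_of_monotone (hmono' _) hpa
    _ ≤ _ := hcount hp ha
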